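/- Let ν be a Borel probability measure on the unit sphere S^{d-1} of ℝ^d (d ≥ 2) with mean m = ∫_{S^{d-1}} x dν(x). Then there exists a Borel probability measure ν̄ on S^{d-1} with zero mean such that d_C(ν, ν̄) ≤ 2‖m‖. -/

import Mathlib

open MeasureTheory Metric Set

noncomputable section

abbrev Euc (d : ℕ) := EuclideanSpace ℝ (Fin d)

variable {d : ℕ}

/-- Support function of a set, evaluated at `u`. -/
def suppFn (M : Set (Euc d)) (u : Euc d) : ℝ := sSup ((fun x => (inner ℝ x u : ℝ)) '' M)

/-- Nonempty compact convex subsets of the closed unit ball. -/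
def UnitBallConvex (d : ℕ) : Type :=
  {M : Set (Euc d) // M.Nonempty ∧ IsCompact M ∧ Convex ℝ M ∧ M ⊆ closedBall 0 1}

/-- Convex-dual distance between measures. -/
def dC (μ ν : Measure (Euc d)) : ℝ :=
  ⨆ M : UnitBallConvex d,
    |(∫ u in sphere (0 : Euc d) 1, suppFn M.1 u ∂μ) -
      ∫ u in sphere (0 : Euc d) 1, suppFn M.1 u ∂ν|

/-- Weak rotundity. -/
def rotund (μ : Measure (Euc d)) : ℝ :=
  ⨅ y : sphere (0 : Euc d) 1,
    ∫ v in sphere (0 : Euc d) 1, max (inner ℝ (y : Euc d) v : ℝ) 0 ∂μ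

/-- `v` is a unit outer normal of `K` at `x`. -/
def IsUnitOuterNormal (K : Set (Euc d)) (x v : Euc d) : Prop :=
  ‖v‖ = 1 ∧ ∀ y ∈ K, 0 ≤ (inner ℝ (x - y) v : ℝ)

open Classical in
/-- Gauss map: the unique unit outer normal where it exists. -/
def gaussMap (K : Set (Euc d)) (x : Euc d) : Euc d :=
  if h : ∃! v, IsUnitOuterNormal K x v then h.choose else 0

/-- Surface area measure of `K`. -/
def surfaceMeasure (K : Set (Euc d)) : Measure (Euc d) :=
  Measure.map (gaussMap K)
    ((Measure.hausdorffMeasure ((d : ℝ) - 1)).restrict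
      {x | x ∈ frontier K ∧ ∃! v, IsUnitOuterNormal K x v})

/-- Convex body. -/
def IsConvexBody (K : Set (Euc d)) : Prop :=
  IsCompact K ∧ Convex ℝ K ∧ (interior K).Nonempty

/-- First mixed volume `V₁(K, L)`. -/
def mixedVol1 (K L : Set (Euc d)) : ℝ :=
  (1 / d) * ∫ u in sphere (0 : Euc d) 1, suppFn L u ∂(surfaceMeasure K)

/-- Volume (Lebesgue measure). -/
def vol (K : Set (Euc d)) : ℝ := (volume K).toReal

def inradius (K : Set (Euc d)) : ℝ :=
  sSup {r : ℝ | 0 ≤ r ∧ ∃ x, closedBall x r ⊆ K}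

def circumradius (K : Set (Euc d)) : ℝ :=
  sInf {r : ℝ | 0 ≤ r ∧ ∃ x, K ⊆ closedBall x r}

end

/-! Add to `ν` the point mass `‖m‖ δ_u` at `u = -m / ‖m‖` (any unit `u` if `m = 0`) and
renormalise by `1 + ‖m‖`: the mean becomes `(m + ‖m‖ u) / (1 + ‖m‖) = 0`. Against any `h` with
`|h| ≤ 1` on the sphere (support functions of subsets of the unit ball are such), the integral
moves by `‖m‖ / (1 + ‖m‖) · |∫ h dν - h u| ≤ 2 ‖m‖`. -/

section SupportFunction

variable {d : ℕ} {M : Set (Euc d)}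

lemma abs_inner_le_norm_of_mem_closedBall {x : Euc d} (hx : x ∈ closedBall 0 1) (v : Euc d) :
    |(inner ℝ x v : ℝ)| ≤ ‖v‖ :=
  calc |(inner ℝ x v : ℝ)| ≤ ‖x‖ * ‖v‖ := abs_real_inner_le_norm x v
    _ ≤ 1 * ‖v‖ := by gcongr; exact mem_closedBall_zero_iff.mp hx
    _ = ‖v‖ := one_mul _

lemma bddAbove_inner_image (hM : M ⊆ closedBall 0 1) (v : Euc d) :
    BddAbove ((fun x => (inner ℝ x v : ℝ)) '' M) := by
  refine ⟨‖v‖, ?_⟩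
  rintro _ ⟨x, hx, rfl⟩
  exact (abs_le.mp (abs_inner_le_norm_of_mem_closedBall (hM hx) v)).2

lemma abs_suppFn_le_norm (hne : M.Nonempty) (hM : M ⊆ closedBall 0 1) (v : Euc d) :
    |suppFn M v| ≤ ‖v‖ := by
  obtain ⟨x₀, hx₀⟩ := hne
  rw [abs_le]
  constructor
  · exact (abs_le.mp (abs_inner_le_norm_of_mem_closedBall (hM hx₀) v)).1.trans
      (le_csSup (bddAbove_inner_image hM v) ⟨x₀, hx₀, rfl⟩)
  · refine csSup_le ⟨_, x₀, hx₀, rfl⟩ ?_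
    rintro _ ⟨x, hx, rfl⟩
    exact (abs_le.mp (abs_inner_le_norm_of_mem_closedBall (hM hx) v)).2

lemma suppFn_le_add_norm_sub (hne : M.Nonempty) (hM : M ⊆ closedBall 0 1) (u v : Euc d) :
    suppFn M u ≤ suppFn M v + ‖u - v‖ := by
  refine csSup_le (hne.image _) ?_
  rintro _ ⟨x, hx, rfl⟩
  have hv : (inner ℝ x v : ℝ) ≤ suppFn M v := le_csSup (bddAbove_inner_image hM v) ⟨x, hx, rfl⟩
  have huv := (abs_le.mp (abs_inner_le_norm_of_mem_closedBall (hM hx) (u - v))).2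
  rw [inner_sub_right] at huv
  dsimp only
  linarith

lemma lipschitzWith_suppFn (hne : M.Nonempty) (hM : M ⊆ closedBall 0 1) :
    LipschitzWith 1 (suppFn M) :=
  LipschitzWith.of_le_add fun u v => by
    simpa only [dist_eq_norm] using suppFn_le_add_norm_sub hne hM u v

end SupportFunction

section MixDirac

variable {α E : Type*} [MeasurableSpace α] [NormedAddCommGroup E] [NormedSpace ℝ E]

/-- `(μ + t δ_a) / (1 + t)`; meant for `t ≥ 0`, since `ENNReal.ofReal` truncates negatives. -/
noncomputable def mixDirac (μ : Measure α) (a : α) (t : ℝ) : Measure α :=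
  (ENNReal.ofReal (1 + t))⁻¹ • (μ + ENNReal.ofReal t • Measure.dirac a)

lemma isProbabilityMeasure_mixDirac (μ : Measure α) [IsProbabilityMeasure μ] (a : α) {t : ℝ}
    (ht : 0 ≤ t) : IsProbabilityMeasure (mixDirac μ a t) := by
  constructor
  have hne : ENNReal.ofReal (1 + t) ≠ 0 := by
    rw [Ne, ENNReal.ofReal_eq_zero, not_le]; linarith
  rw [mixDirac, Measure.smul_apply, Measure.add_apply, Measure.smul_apply, measure_univ,
    measure_univ, smul_eq_mul, smul_eq_mul, mul_one, ← ENNReal.ofReal_one,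
    ← ENNReal.ofReal_add zero_le_one ht, ENNReal.ofReal_one]
  exact ENNReal.inv_mul_cancel hne ENNReal.ofReal_ne_top

lemma mixDirac_apply_eq_zero {μ : Measure α} {a : α} {s : Set α} (t : ℝ) (hs : MeasurableSet s)
    (hμ : μ s = 0) (ha : a ∉ s) : mixDirac μ a t s = 0 := by
  simp [mixDirac, hμ, Measure.dirac_apply' a hs, ha]

lemma setIntegral_mixDirac [MeasurableSingletonClass α] [CompleteSpace E] {μ : Measure α}
    {a : α} {s : Set α} {t : ℝ} {f : α → E} (ha : a ∈ s) (ht : 0 ≤ t)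
    (hf : IntegrableOn f s μ) :
    ∫ x in s, f x ∂mixDirac μ a t = (1 + t)⁻¹ • ((∫ x in s, f x ∂μ) + t • f a) := by
  classical
  have hdirac : IntegrableOn f s (Measure.dirac a) :=
    (integrable_dirac enorm_lt_top).restrict
  rw [mixDirac, Measure.restrict_smul, Measure.restrict_add, Measure.restrict_smul,
    integral_smul_measure, integral_add_measure hf (hdirac.smul_measure ENNReal.ofReal_ne_top),
    integral_smul_measure, setIntegral_dirac, if_pos ha, ENNReal.toReal_inv,
    ENNReal.toReal_ofReal (by linarith), ENNReal.toReal_ofReal ht]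

end MixDirac

variable {d : ℕ}

instance : Nonempty (UnitBallConvex d) :=
  ⟨⟨{0}, singleton_nonempty 0, isCompact_singleton, convex_singleton 0,
    singleton_subset_iff.mpr (mem_closedBall_self zero_le_one)⟩⟩

lemma abs_setIntegral_suppFn_le (μ : Measure (Euc d)) [IsProbabilityMeasure μ]
    (M : UnitBallConvex d) : |∫ x in sphere (0 : Euc d) 1, suppFn M.1 x ∂μ| ≤ 1 := by
  obtain ⟨hne, -, -, hM⟩ := M.2
  rw [← Real.norm_eq_abs]
  calc ‖∫ x in sphere (0 : Euc d) 1, suppFn M.1 x ∂μ‖ ≤ 1 * μ.real (sphere 0 1) :=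
        norm_setIntegral_le_of_norm_le_const (measure_lt_top μ _) fun x hx =>
          (abs_suppFn_le_norm hne hM x).trans (mem_sphere_zero_iff_norm.mp hx).le
    _ ≤ 1 := by rw [one_mul]; exact measureReal_le_one

lemma dC_mixDirac_le (ν : Measure (Euc d)) [IsProbabilityMeasure ν] {u : Euc d}
    (hu : u ∈ sphere (0 : Euc d) 1) {t : ℝ} (ht : 0 ≤ t) :
    dC ν (mixDirac ν u t) ≤ 2 * t := by
  refine ciSup_le fun M => ?_
  obtain ⟨hne, -, -, hM⟩ := M.2
  set A := ∫ x in sphere (0 : Euc d) 1, suppFn M.1 x ∂ν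
  set B := suppFn M.1 u
  have hA : |A| ≤ 1 := abs_setIntegral_suppFn_le ν M
  have hB : |B| ≤ 1 := (abs_suppFn_le_norm hne hM u).trans (mem_sphere_zero_iff_norm.mp hu).le
  have hint : IntegrableOn (suppFn M.1) (sphere (0 : Euc d) 1) ν :=
    (lipschitzWith_suppFn hne hM).continuous.continuousOn.integrableOn_compact
      (isCompact_sphere 0 1)
  rw [setIntegral_mixDirac hu ht hint, smul_eq_mul, smul_eq_mul]
  have hpos : 0 < 1 + t := by linarith
  calc |A - (1 + t)⁻¹ * (A + t * B)| = t / (1 + t) * |A - B| := by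
        rw [show A - (1 + t)⁻¹ * (A + t * B) = t / (1 + t) * (A - B) by field_simp; ring,
          abs_mul, abs_of_nonneg (by positivity)]
    _ ≤ t * 2 := by
        gcongr
        · exact div_le_self ht (by linarith)
        · linarith [abs_sub A B]
    _ = 2 * t := mul_comm t 2

lemma exists_mem_sphere_smul_eq_neg {E : Type*} [NormedAddCommGroup E] [NormedSpace ℝ E]
    (hE : (sphere (0 : E) 1).Nonempty) (m : E) : ∃ u ∈ sphere (0 : E) 1, ‖m‖ • u = -m := by
  rcases eq_or_ne m 0 with rfl | hm
  · obtain ⟨u, hu⟩ := hE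
    exact ⟨u, hu, by simp⟩
  · refine ⟨-(‖m‖⁻¹ • m), ?_, ?_⟩
    · simp [norm_smul, hm]
    · rw [smul_neg, smul_inv_smul₀ (norm_ne_zero_iff.mpr hm)]

theorem exists_zero_mean_perturbation_general (d : ℕ) (ν : Measure (Euc d))
    [IsProbabilityMeasure ν] (hν : ν ((sphere (0 : Euc d) 1)ᶜ) = 0) :
    ∃ νbar : Measure (Euc d), IsProbabilityMeasure νbar ∧
      νbar ((sphere (0 : Euc d) 1)ᶜ) = 0 ∧
      (∫ x in sphere (0 : Euc d) 1, x ∂νbar) = 0 ∧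
      dC ν νbar ≤ 2 * ‖∫ x in sphere (0 : Euc d) 1, x ∂ν‖ := by
  set m := ∫ x in sphere (0 : Euc d) 1, x ∂ν
  have hsphere : (sphere (0 : Euc d) 1).Nonempty := nonempty_of_measure_ne_zero <| by
    rw [(prob_compl_eq_zero_iff isClosed_sphere.measurableSet).mp hν]; exact one_ne_zero
  obtain ⟨u, hu, hmu⟩ := exists_mem_sphere_smul_eq_neg hsphere m
  refine ⟨mixDirac ν u ‖m‖, isProbabilityMeasure_mixDirac ν u (norm_nonneg m),
    mixDirac_apply_eq_zero _ isClosed_sphere.measurableSet.compl hν (not_not.mpr hu), ?_,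
    dC_mixDirac_le ν hu (norm_nonneg m)⟩
  have hint : IntegrableOn (fun x : Euc d => x) (sphere 0 1) ν :=
    continuous_id.continuousOn.integrableOn_compact (isCompact_sphere 0 1)
  rw [setIntegral_mixDirac hu (norm_nonneg m) hint, hmu, add_neg_cancel, smul_zero]

/-- A probability measure on the sphere with mean `m` can be perturbed, by
at most `2‖m‖` in convex-dual distance, into a probability measure with zero mean. -/
theorem exists_zero_mean_perturbation (d : ℕ) (hd : 2 ≤ d) (ν : Measure (Euc d))
    [IsProbabilityMeasure ν] (hν : ν ((sphere (0 : Euc d) 1)ᶜ) = 0) :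
    ∃ νbar : Measure (Euc d), IsProbabilityMeasure νbar ∧
      νbar ((sphere (0 : Euc d) 1)ᶜ) = 0 ∧
      (∫ x in sphere (0 : Euc d) 1, x ∂νbar) = 0 ∧
      dC ν νbar ≤ 2 * ‖∫ x in sphere (0 : Euc d) 1, x ∂ν‖ :=
  exists_zero_mean_perturbation_general d ν hν
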